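/- Let K ∈ ℝ^{(n−p)×p}, let i ∈ {1,…,p} with e_i^T·A12 ≠ 0, let Q ∈ ℝ^{(n−p)×(n−p)} be an orthogonal matrix satisfying e_i^T·A12·Q^T = ‖e_i^T·A12‖·e_{n−p}^T (Euclidean norm; e_{n−p} the last standard basis vector of ℝ^{n−p}), and let 1 ≤ n_i ≤ n−p be such that [0, I_{n_i}]·Q·(A22 + K·A12)·Q^T·[I_{n−p−n_i}; 0] = 0. Then the i-th row of [W V] admits the order-n_i realization e_i^T·[W V] = e_i^T·[A11 − A12·K, B1] + C̃·(λI_{n_i} − Ã)^{-1}·B̃, where Ã := [0, I_{n_i}]·Q·(A22 + K·A12)·Q^T·[0, I_{n_i}]^T ∈ ℝ^{n_i×n_i}, B̃ := [0, I_{n_i}]·Q·[A_K, K·B1 + B2] ∈ ℝ^{n_i×(p+m)}, and C̃ := e_i^T·A12·Q^T·[0, I_{n_i}]^T ∈ ℝ^{1×n_i}. -/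

import Mathlib

/-! Conjugating by the orthogonal `Q` turns `λI - (A22 + K A12)` into a block upper-triangular
pencil. Since the `i`-th row of `A12 Qᵀ` vanishes on the first block, a row vector supported on
the second block only meets the lower-right block `(λI - Ã)⁻¹` of the inverse, which yields the
realization of order `t`. -/

open Matrix Polynomial

set_option synthInstance.maxHeartbeats 1000000
set_option maxHeartbeats 1000000

noncomputable section

/-- The field of real rational functions. -/
abbrev FF : Type := RatFunc ℝ

/-- The rational function `λ` (the image of the polynomial indeterminate `X`). -/
noncomputable def lam : FF := RatFunc.X

/-- Entrywise embedding of a real matrix into matrices over `FF`. -/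
noncomputable def mapF {k l : Type} (M : Matrix k l ℝ) : Matrix k l FF :=
  M.map (algebraMap ℝ FF)

/-- The pencil `λ I - M` over `FF`, for a real square matrix `M`. -/
noncomputable def lamI {k : Type} [Fintype k] [DecidableEq k] (M : Matrix k k ℝ) :
    Matrix k k FF := lam • (1 : Matrix k k FF) - mapF M

/-- Entrywise complexification of a real matrix. -/
def mapC {k l : Type} (M : Matrix k l ℝ) : Matrix k l ℂ :=
  M.map (algebraMap ℝ ℂ)

/-- A real rational function is stable if every complex root of its reduced denominator
has real part `< 0`. -/
def StableF (f : RatFunc ℝ) : Prop :=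
  ∀ z : ℂ, ((f.denom).map (algebraMap ℝ ℂ)).IsRoot z → z.re < 0

/-- A real square matrix is Hurwitz if all roots of its characteristic polynomial
have real part `< 0`. -/
def IsHurwitz {k : Type} [Fintype k] [DecidableEq k] (M : Matrix k k ℝ) : Prop :=
  ∀ z : ℂ, ((M.charpoly).map (algebraMap ℝ ℂ)).IsRoot z → z.re < 0

/-- `A_K := K A11 - K A12 K + A21 - A22 K`. -/
noncomputable def AKmat {p r : ℕ} (A11 : Matrix (Fin p) (Fin p) ℝ)
    (A12 : Matrix (Fin p) (Fin r) ℝ) (A21 : Matrix (Fin r) (Fin p) ℝ)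
    (A22 : Matrix (Fin r) (Fin r) ℝ) (K : Matrix (Fin r) (Fin p) ℝ) :
    Matrix (Fin r) (Fin p) ℝ :=
  K * A11 - K * A12 * K + A21 - A22 * K

/-- The `W` member of the SRTR pair obtained from `K`. -/
noncomputable def srtrW {p r : ℕ} (A11 : Matrix (Fin p) (Fin p) ℝ)
    (A12 : Matrix (Fin p) (Fin r) ℝ) (A21 : Matrix (Fin r) (Fin p) ℝ)
    (A22 : Matrix (Fin r) (Fin r) ℝ) (K : Matrix (Fin r) (Fin p) ℝ) :
    Matrix (Fin p) (Fin p) FF :=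
  mapF (A11 - A12 * K) +
    mapF A12 * (lamI (A22 + K * A12))⁻¹ * mapF (AKmat A11 A12 A21 A22 K)

/-- The `V` member of the SRTR pair obtained from `K`. -/
noncomputable def srtrV {p r m : ℕ} (A12 : Matrix (Fin p) (Fin r) ℝ)
    (A22 : Matrix (Fin r) (Fin r) ℝ) (B1 : Matrix (Fin p) (Fin m) ℝ)
    (B2 : Matrix (Fin r) (Fin m) ℝ) (K : Matrix (Fin r) (Fin p) ℝ) :
    Matrix (Fin p) (Fin m) FF :=
  mapF B1 + mapF A12 * (lamI (A22 + K * A12))⁻¹ * mapF (K * B1 + B2)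

/-- The plant transfer function `G = [I_p 0] (λ I_n - A)⁻¹ B`. -/
noncomputable def plantG {p r m : ℕ} (A11 : Matrix (Fin p) (Fin p) ℝ)
    (A12 : Matrix (Fin p) (Fin r) ℝ) (A21 : Matrix (Fin r) (Fin p) ℝ)
    (A22 : Matrix (Fin r) (Fin r) ℝ) (B1 : Matrix (Fin p) (Fin m) ℝ)
    (B2 : Matrix (Fin r) (Fin m) ℝ) : Matrix (Fin p) (Fin m) FF :=
  fromCols (1 : Matrix (Fin p) (Fin p) FF) (0 : Matrix (Fin p) (Fin r) FF) *
    (lamI (fromBlocks A11 A12 A21 A22))⁻¹ * mapF (fromRows B1 B2)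

/-- `(A12, A22)` is observable: `[A22 - μ I ; A12]` has full column rank for all `μ : ℂ`. -/
def ObsPair {p r : ℕ} (A12 : Matrix (Fin p) (Fin r) ℝ)
    (A22 : Matrix (Fin r) (Fin r) ℝ) : Prop :=
  ∀ μ : ℂ, (fromRows (mapC A22 - μ • (1 : Matrix (Fin r) (Fin r) ℂ)) (mapC A12)).rank = r

/-- `(A, B)` is controllable: `[A - μ I, B]` has full row rank for all `μ : ℂ`. -/
def CtrbPair {p r m : ℕ} (A : Matrix (Fin p ⊕ Fin r) (Fin p ⊕ Fin r) ℝ)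
    (B : Matrix (Fin p ⊕ Fin r) (Fin m) ℝ) : Prop :=
  ∀ μ : ℂ, (fromCols (mapC A - μ • (1 : Matrix (Fin p ⊕ Fin r) (Fin p ⊕ Fin r) ℂ))
    (mapC B)).rank = p + r

namespace Matrix

theorem inv_mul_mul_eq_of_mul_eq_one {R k l : Type*} [CommRing R] [Fintype k] [DecidableEq k]
    [Fintype l] [DecidableEq l] (U : Matrix k l R) (A : Matrix l l R) (V : Matrix l k R)
    (hUV : U * V = 1) (hVU : V * U = 1) (hA : IsUnit A.det) :
    (U * A * V)⁻¹ = U * A⁻¹ * V := by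
  apply inv_eq_right_inv
  calc U * A * V * (U * A⁻¹ * V) = U * (A * (V * U) * A⁻¹) * V := by
        simp only [Matrix.mul_assoc]
    _ = 1 := by rw [hVU, Matrix.mul_one, mul_nonsing_inv _ hA, Matrix.mul_one, hUV]

end Matrix

lemma mapF_mul {k l o : Type} [Fintype l] (A : Matrix k l ℝ) (B : Matrix l o ℝ) :
    mapF (A * B) = mapF A * mapF B :=
  Matrix.map_mul

lemma mapF_one {k : Type} [Fintype k] [DecidableEq k] : mapF (1 : Matrix k k ℝ) = 1 :=
  Matrix.map_one _ (map_zero _) (map_one _)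

lemma lamI_eq_map_charmatrix {k : Type} [Fintype k] [DecidableEq k] (M : Matrix k k ℝ) :
    lamI M = (charmatrix M).map (algebraMap ℝ[X] FF) := by
  ext a b
  by_cases h : a = b
  · subst h
    simp [lamI, mapF, charmatrix_apply_eq, lam]
  · simp [lamI, mapF, charmatrix_apply_ne _ _ _ h, Matrix.one_apply_ne h, lam]

lemma isUnit_det_lamI {k : Type} [Fintype k] [DecidableEq k] (M : Matrix k k ℝ) :
    IsUnit (lamI M).det := by
  rw [lamI_eq_map_charmatrix, ← RingHom.mapMatrix_apply, ← RingHom.map_det, isUnit_iff_ne_zero,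
    ← charpoly, ne_eq, map_eq_zero_iff _ (RatFunc.algebraMap_injective ℝ)]
  exact M.charpoly_monic.ne_zero

lemma mapF_mul_lamI_mul_mapF {k l : Type} [Fintype k] [DecidableEq k] [Fintype l] [DecidableEq l]
    (U : Matrix k l ℝ) (N : Matrix l l ℝ) (V : Matrix l k ℝ) (hUV : U * V = 1) :
    mapF U * lamI N * mapF V = lamI (U * N * V) := by
  have hUV' : mapF U * mapF V = 1 := by rw [← mapF_mul, hUV, mapF_one]
  simp only [lamI, Matrix.mul_sub, Matrix.sub_mul, mapF_mul, Matrix.mul_smul, Matrix.smul_mul,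
    Matrix.mul_one, hUV']

lemma inv_lamI_eq_conj {k l : Type} [Fintype k] [DecidableEq k] [Fintype l] [DecidableEq l]
    (M : Matrix k k ℝ) (Q : Matrix l k ℝ) (h1 : Q * Qᵀ = 1) (h2 : Qᵀ * Q = 1) :
    (lamI M)⁻¹ = mapF Qᵀ * (lamI (Q * M * Qᵀ))⁻¹ * mapF Q := by
  have hM : M = Qᵀ * (Q * M * Qᵀ) * Q := by
    simp only [← Matrix.mul_assoc, h2, Matrix.one_mul]
    rw [Matrix.mul_assoc, h2, Matrix.mul_one]
  have hQ2 : mapF Qᵀ * mapF Q = 1 := by rw [← mapF_mul, h2, mapF_one]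
  have hQ1 : mapF Q * mapF Qᵀ = 1 := by rw [← mapF_mul, h1, mapF_one]
  conv_lhs => rw [hM, ← mapF_mul_lamI_mul_mapF _ _ _ h2]
  exact Matrix.inv_mul_mul_eq_of_mul_eq_one _ _ _ hQ2 hQ1 (isUnit_det_lamI _)

lemma lamI_fromBlocks {k l : Type} [Fintype k] [DecidableEq k] [Fintype l] [DecidableEq l]
    (A : Matrix k k ℝ) (B : Matrix k l ℝ) (C : Matrix l k ℝ) (D : Matrix l l ℝ) :
    lamI (fromBlocks A B C D) = fromBlocks (lamI A) (-mapF B) (-mapF C) (lamI D) := by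
  simp only [lamI, mapF, fromBlocks_map, ← fromBlocks_one, fromBlocks_smul, sub_eq_add_neg,
    fromBlocks_neg, fromBlocks_add, smul_zero, zero_add]

lemma sumElim_zero_vecMul_inv_lamI {k l : Type} [Fintype k] [DecidableEq k] [Fintype l]
    [DecidableEq l] (P : Matrix (k ⊕ l) (k ⊕ l) ℝ) (hP : P.toBlocks₂₁ = 0) (x : l → FF) :
    Sum.elim (0 : k → FF) x ᵥ* (lamI P)⁻¹ =
      Sum.elim (0 : k → FF) (x ᵥ* (lamI P.toBlocks₂₂)⁻¹) := by
  have hunit : IsUnit (lamI P.toBlocks₁₁) ↔ IsUnit (lamI P.toBlocks₂₂) := by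
    simp only [isUnit_iff_isUnit_det, isUnit_det_lamI]
  have hzero : mapF (0 : Matrix l k ℝ) = 0 := Matrix.map_zero _ (map_zero _)
  rw [← fromBlocks_toBlocks P, lamI_fromBlocks, hP, hzero, neg_zero,
    inv_fromBlocks_zero₂₁_of_isUnit_iff _ _ _ hunit, vecMul_fromBlocks]
  simp

lemma mapF_mul_inv_lamI_mul_mapF_row {n k l o c : Type} [Fintype k] [DecidableEq k] [Fintype l]
    [DecidableEq l] [Fintype o] [DecidableEq o] (C : Matrix n k ℝ) (M : Matrix k k ℝ)
    (N : Matrix k c ℝ) (Q : Matrix (l ⊕ o) k ℝ) (h1 : Q * Qᵀ = 1) (h2 : Qᵀ * Q = 1)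
    (hP : (Q * M * Qᵀ).toBlocks₂₁ = 0) (i : n) (hCi : ∀ a, (C * Qᵀ) i (Sum.inl a) = 0) :
    (mapF C * (lamI M)⁻¹ * mapF N) i =
      (fun a => algebraMap ℝ FF ((C * Qᵀ) i (Sum.inr a))) ᵥ*
        ((lamI (Q * M * Qᵀ).toBlocks₂₂)⁻¹ * mapF (toRows₂ (Q * N))) := by
  set x : o → FF := fun a => algebraMap ℝ FF ((C * Qᵀ) i (Sum.inr a))
  have hrow : mapF (C * Qᵀ) i = Sum.elim (0 : l → FF) x := by
    funext a
    cases a <;> simp [mapF, x, hCi]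
  have hQN : mapF (Q * N) = fromRows (mapF (toRows₁ (Q * N))) (mapF (toRows₂ (Q * N))) := by
    simp only [mapF, ← fromRows_map, fromRows_toRows]
  calc (mapF C * (lamI M)⁻¹ * mapF N) i
      = mapF (C * Qᵀ) i ᵥ* (lamI (Q * M * Qᵀ))⁻¹ ᵥ* mapF (Q * N) := by
        rw [vecMul_vecMul, ← mul_apply_eq_vecMul, inv_lamI_eq_conj M Q h1 h2, mapF_mul, mapF_mul]
        simp only [Matrix.mul_assoc]
    _ = Sum.elim (0 : l → FF) (x ᵥ* (lamI (Q * M * Qᵀ).toBlocks₂₂)⁻¹) ᵥ*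
          fromRows (mapF (toRows₁ (Q * N))) (mapF (toRows₂ (Q * N))) := by
        rw [hrow, sumElim_zero_vecMul_inv_lamI _ hP, hQN]
    _ = x ᵥ* ((lamI (Q * M * Qᵀ).toBlocks₂₂)⁻¹ * mapF (toRows₂ (Q * N))) := by
        rw [sumElim_vecMul_fromRows, zero_vecMul, zero_add, vecMul_vecMul]

lemma fromCols_srtrW_srtrV {p r m : ℕ} (A11 : Matrix (Fin p) (Fin p) ℝ)
    (A12 : Matrix (Fin p) (Fin r) ℝ) (A21 : Matrix (Fin r) (Fin p) ℝ)
    (A22 : Matrix (Fin r) (Fin r) ℝ) (B1 : Matrix (Fin p) (Fin m) ℝ)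
    (B2 : Matrix (Fin r) (Fin m) ℝ) (K : Matrix (Fin r) (Fin p) ℝ) :
    fromCols (srtrW A11 A12 A21 A22 K) (srtrV A12 A22 B1 B2 K) =
      mapF (fromCols (A11 - A12 * K) B1) + mapF A12 * (lamI (A22 + K * A12))⁻¹ *
        mapF (fromCols (AKmat A11 A12 A21 A22 K) (K * B1 + B2)) := by
  simp only [mapF, fromCols_map, mul_fromCols]
  ext _ (_ | _) <;> rfl

theorem stmt_15_general (p r m s t : ℕ)
    (A11 : Matrix (Fin p) (Fin p) ℝ) (A12 : Matrix (Fin p) (Fin r) ℝ)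
    (A21 : Matrix (Fin r) (Fin p) ℝ) (A22 : Matrix (Fin r) (Fin r) ℝ)
    (B1 : Matrix (Fin p) (Fin m) ℝ) (B2 : Matrix (Fin r) (Fin m) ℝ)
    (K : Matrix (Fin r) (Fin p) ℝ) (i : Fin p)
    (Q : Matrix (Fin s ⊕ Fin t) (Fin r) ℝ)
    (hQ1 : Q * Qᵀ = 1) (hQ2 : Qᵀ * Q = 1)
    (hcompl : ∀ a : Fin s, (A12 * Qᵀ) i (Sum.inl a) = 0)
    (hv : (Q * (A22 + K * A12) * Qᵀ).toBlocks₂₁ = 0) :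
    ∀ c : Fin p ⊕ Fin m,
      fromCols (srtrW A11 A12 A21 A22 K) (srtrV A12 A22 B1 B2 K) i c =
        algebraMap ℝ FF (fromCols (A11 - A12 * K) B1 i c) +
        Matrix.vecMul (fun a : Fin t => algebraMap ℝ FF ((A12 * Qᵀ) i (Sum.inr a)))
          ((lamI ((Q * (A22 + K * A12) * Qᵀ).toBlocks₂₂))⁻¹ *
            mapF (toRows₂ (Q * fromCols (AKmat A11 A12 A21 A22 K) (K * B1 + B2)))) c := by
  intro c
  rw [fromCols_srtrW_srtrV, Matrix.add_apply,
    mapF_mul_inv_lamI_mul_mapF_row A12 _ _ Q hQ1 hQ2 hv i hcompl]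
  rfl

/-- if the `i`-th row of `A12` is nonzero, `Q` is orthogonal and compresses
that row into its last entry, and the `(2,1)`-block of `Q (A22 + K A12) Qᵀ` vanishes,
then the `i`-th row of `[W V]` admits the displayed realization of order `n_i = t`. -/
theorem stmt_15 (p r m s t : ℕ) (hp : 0 < p) (hr : 0 < r) (hm : 0 < m)
    (ht : 0 < t) (hst : s + t = r)
    (A11 : Matrix (Fin p) (Fin p) ℝ) (A12 : Matrix (Fin p) (Fin r) ℝ)
    (A21 : Matrix (Fin r) (Fin p) ℝ) (A22 : Matrix (Fin r) (Fin r) ℝ)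
    (B1 : Matrix (Fin p) (Fin m) ℝ) (B2 : Matrix (Fin r) (Fin m) ℝ)
    (K : Matrix (Fin r) (Fin p) ℝ) (i : Fin p)
    (hi : (fun j : Fin r => A12 i j) ≠ 0)
    (Q : Matrix (Fin s ⊕ Fin t) (Fin r) ℝ)
    (hQ1 : Q * Qᵀ = 1) (hQ2 : Qᵀ * Q = 1)
    (hcompl : ∀ a : Fin s, (A12 * Qᵀ) i (Sum.inl a) = 0)
    (hcompr : ∀ a : Fin t, (A12 * Qᵀ) i (Sum.inr a) =
      if (a : ℕ) + 1 = t then Real.sqrt (∑ j : Fin r, A12 i j ^ 2) else 0)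
    (hv : (Q * (A22 + K * A12) * Qᵀ).toBlocks₂₁ = 0) :
    ∀ c : Fin p ⊕ Fin m,
      fromCols (srtrW A11 A12 A21 A22 K) (srtrV A12 A22 B1 B2 K) i c =
        algebraMap ℝ FF (fromCols (A11 - A12 * K) B1 i c) +
        Matrix.vecMul (fun a : Fin t => algebraMap ℝ FF ((A12 * Qᵀ) i (Sum.inr a)))
          ((lamI ((Q * (A22 + K * A12) * Qᵀ).toBlocks₂₂))⁻¹ *
            mapF (toRows₂ (Q * fromCols (AKmat A11 A12 A21 A22 K) (K * B1 + B2)))) c :=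
  stmt_15_general p r m s t A11 A12 A21 A22 B1 B2 K i Q hQ1 hQ2 hcompl hv
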